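/- arXiv:1806.09215 — 2 statements merged into one kernel-verified Lean document; each statement's English description precedes it below -/
import Mathlib

section
/- Let N ≥ 1, let h : Fin N → ℝ, let p̂ be a probability vector in ℝ^N, and let c : Fin N × Fin N → ℝ≥0 satisfy c(i,i) = 0. Define W(p) = min { Σ_{i,j} c(i,j) w_{ij} : w ≥ 0, Σ_j w_{ij} = p_i ∀i, Σ_i w_{ij} = p̂_j ∀j } for probability vectors p. Then the function r ↦ max { Σ_i h_i p_i : p a probability vector with W(p) ≤ r } is nondecreasing and concave on [0, ∞). -/
/-!
The optimal transport cost `p ↦ W p` to a fixed reference vector is convex on the simplex: a convex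
combination of couplings of `p₁` and `p₂` with `p̂` is a coupling of the mixed vector with `p̂`,
and the transport cost is linear in the coupling. The worst-case value
`r ↦ sup {⟪h, p⟫ | p ∈ Δ, W p ≤ r}` is then monotone because the feasible sets grow with `r`, and
concave because mixing feasible points for radii `r₁, r₂` gives a feasible point for the mixed
radius. The diagonal coupling shows `W p̂ = 0`, so every radius `r ≥ 0` is feasible.
-/

open Finset

namespace Real

variable {A B : Set ℝ} {a b M : ℝ}

lemma smul_csSup_add_smul_csSup_le (hA : A.Nonempty) (hA' : BddAbove A) (hB : B.Nonempty)
    (hB' : BddAbove B) (ha : 0 ≤ a) (hb : 0 ≤ b) (h : ∀ x ∈ A, ∀ y ∈ B, a * x + b * y ≤ M) :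
    a * sSup A + b * sSup B ≤ M := by
  rw [← smul_eq_mul, ← smul_eq_mul, ← sSup_smul_of_nonneg ha, ← sSup_smul_of_nonneg hb,
    ← csSup_add hA.smul_set (hA'.smul_of_nonneg ha) hB.smul_set (hB'.smul_of_nonneg hb)]
  refine csSup_le (hA.smul_set.add hB.smul_set) ?_
  rintro _ ⟨_, ⟨x, hx, rfl⟩, _, ⟨y, hy, rfl⟩, rfl⟩
  exact h x hx y hy

lemma le_smul_csInf_add_smul_csInf (hA : A.Nonempty) (hA' : BddBelow A) (hB : B.Nonempty)
    (hB' : BddBelow B) (ha : 0 ≤ a) (hb : 0 ≤ b) (h : ∀ x ∈ A, ∀ y ∈ B, M ≤ a * x + b * y) :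
    M ≤ a * sInf A + b * sInf B := by
  rw [← smul_eq_mul, ← smul_eq_mul, ← sInf_smul_of_nonneg ha, ← sInf_smul_of_nonneg hb,
    ← csInf_add hA.smul_set (hA'.smul_of_nonneg ha) hB.smul_set (hB'.smul_of_nonneg hb)]
  refine le_csInf (hA.smul_set.add hB.smul_set) ?_
  rintro _ ⟨_, ⟨x, hx, rfl⟩, _, ⟨y, hy, rfl⟩, rfl⟩
  exact h x hx y hy

end Real

lemma monotoneOn_sSup_image_sublevel {α : Type*} {s : Set α} {Φ f : α → ℝ}
    (hf : BddAbove (f '' s)) (hΦ : ∃ p₀ ∈ s, Φ p₀ ≤ 0) :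
    MonotoneOn (fun r => sSup (f '' {p ∈ s | Φ p ≤ r})) (Set.Ici 0) := by
  obtain ⟨p₀, hp₀, hΦp₀⟩ := hΦ
  intro r hr r' _ hrr'
  refine csSup_le_csSup (hf.mono (Set.image_mono fun p hp => hp.1))
    ⟨f p₀, p₀, ⟨hp₀, hΦp₀.trans hr⟩, rfl⟩ (Set.image_mono fun p hp => ⟨hp.1, hp.2.trans hrr'⟩)

lemma concaveOn_sSup_image_sublevel {E : Type*} [AddCommGroup E] [Module ℝ E] {s : Set E}
    {Φ f : E → ℝ} (hΦ : ConvexOn ℝ s Φ) (hf : ConcaveOn ℝ s f)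
    (hf' : BddAbove (f '' s)) (hΦ₀ : ∃ p₀ ∈ s, Φ p₀ ≤ 0) :
    ConcaveOn ℝ (Set.Ici 0) (fun r => sSup (f '' {p ∈ s | Φ p ≤ r})) := by
  obtain ⟨p₀, hp₀, hΦp₀⟩ := hΦ₀
  have hne : ∀ r : ℝ, 0 ≤ r → (f '' {p ∈ s | Φ p ≤ r}).Nonempty :=
    fun r hr => ⟨f p₀, p₀, ⟨hp₀, hΦp₀.trans hr⟩, rfl⟩
  have hbdd : ∀ r : ℝ, BddAbove (f '' {p ∈ s | Φ p ≤ r}) :=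
    fun r => hf'.mono (Set.image_mono fun p hp => hp.1)
  refine ⟨convex_Ici 0, fun r₁ hr₁ r₂ hr₂ a b ha hb hab => ?_⟩
  simp only [smul_eq_mul]
  refine Real.smul_csSup_add_smul_csSup_le (hne r₁ hr₁) (hbdd r₁) (hne r₂ hr₂) (hbdd r₂) ha hb ?_
  rintro _ ⟨p₁, ⟨hp₁, hΦp₁⟩, rfl⟩ _ ⟨p₂, ⟨hp₂, hΦp₂⟩, rfl⟩
  have hmix : a • p₁ + b • p₂ ∈ {p ∈ s | Φ p ≤ a * r₁ + b * r₂} := by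
    refine ⟨hΦ.1 hp₁ hp₂ ha hb hab, (hΦ.2 hp₁ hp₂ ha hb hab).trans ?_⟩
    simp only [smul_eq_mul]
    gcongr
  calc a * f p₁ + b * f p₂ ≤ f (a • p₁ + b • p₂) := hf.2 hp₁ hp₂ ha hb hab
    _ ≤ _ := le_csSup (hbdd _) ⟨_, hmix, rfl⟩

section OptimalTransport

variable {ι : Type*} [Fintype ι]

def couplings (p q : ι → ℝ) : Set (ι → ι → ℝ) :=
  {w | (∀ i j, 0 ≤ w i j) ∧ (∀ i, ∑ j, w i j = p i) ∧ (∀ j, ∑ i, w i j = q j)}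

def transportCost (c w : ι → ι → ℝ) : ℝ := ∑ i, ∑ j, c i j * w i j

noncomputable def optimalTransportCost (c : ι → ι → ℝ) (p q : ι → ℝ) : ℝ :=
  sInf (transportCost c '' couplings p q)

lemma transportCost_smul_add_smul (c w₁ w₂ : ι → ι → ℝ) (a b : ℝ) :
    transportCost c (a • w₁ + b • w₂) = a * transportCost c w₁ + b * transportCost c w₂ := by
  simp only [transportCost, Pi.add_apply, Pi.smul_apply, smul_eq_mul, mul_add, mul_sum,
    sum_add_distrib, mul_left_comm]

lemma smul_add_smul_mem_couplings {p₁ p₂ q : ι → ℝ} {w₁ w₂ : ι → ι → ℝ}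
    (hw₁ : w₁ ∈ couplings p₁ q) (hw₂ : w₂ ∈ couplings p₂ q) {a b : ℝ} (ha : 0 ≤ a) (hb : 0 ≤ b)
    (hab : a + b = 1) : a • w₁ + b • w₂ ∈ couplings (a • p₁ + b • p₂) q := by
  obtain ⟨hw₁0, hw₁r, hw₁c⟩ := hw₁
  obtain ⟨hw₂0, hw₂r, hw₂c⟩ := hw₂
  refine ⟨fun i j => ?_, fun i => ?_, fun j => ?_⟩ <;>
    simp only [Pi.add_apply, Pi.smul_apply, smul_eq_mul]
  · exact add_nonneg (mul_nonneg ha (hw₁0 i j)) (mul_nonneg hb (hw₂0 i j))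
  · rw [sum_add_distrib, ← mul_sum, ← mul_sum, hw₁r, hw₂r]
  · rw [sum_add_distrib, ← mul_sum, ← mul_sum, hw₁c, hw₂c, ← add_mul, hab, one_mul]

lemma couplings_nonempty {p q : ι → ℝ} (hp : p ∈ stdSimplex ℝ ι) (hq : q ∈ stdSimplex ℝ ι) :
    (couplings p q).Nonempty :=
  ⟨fun i j => p i * q j, fun i j => mul_nonneg (hp.1 i) (hq.1 j),
    fun i => by rw [← mul_sum, hq.2, mul_one], fun j => by rw [← sum_mul, hp.2, one_mul]⟩

lemma le_of_mem_couplings {p q : ι → ℝ} {w : ι → ι → ℝ} (hw : w ∈ couplings p q) (i j : ι) :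
    w i j ≤ q j :=
  hw.2.2 j ▸ single_le_sum (fun k _ => hw.1 k j) (mem_univ i)

lemma bddBelow_transportCost_image (c : ι → ι → ℝ) (p q : ι → ℝ) :
    BddBelow (transportCost c '' couplings p q) := by
  refine ⟨-∑ i, ∑ j, |c i j| * q j, ?_⟩
  rintro _ ⟨w, hw, rfl⟩
  rw [transportCost, ← sum_neg_distrib]
  refine sum_le_sum fun i _ => ?_
  rw [← sum_neg_distrib]
  refine sum_le_sum fun j _ => ?_
  calc -(|c i j| * q j) ≤ -(|c i j| * w i j) :=
        neg_le_neg (mul_le_mul_of_nonneg_left (le_of_mem_couplings hw i j) (abs_nonneg _))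
    _ = -|c i j| * w i j := neg_mul _ _ |>.symm
    _ ≤ c i j * w i j := mul_le_mul_of_nonneg_right (neg_abs_le _) (hw.1 i j)

lemma optimalTransportCost_self_nonpos {c : ι → ι → ℝ} (hc : ∀ i, c i i = 0) {q : ι → ℝ}
    (hq : ∀ i, 0 ≤ q i) : optimalTransportCost c q q ≤ 0 := by
  classical
  have hdiag : (fun i j => if i = j then q i else 0) ∈ couplings q q :=
    ⟨fun i j => by dsimp only; split_ifs <;> simp [hq], fun i => by simp, fun j => by simp⟩
  refine csInf_le (bddBelow_transportCost_image c q q) ⟨_, hdiag, ?_⟩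
  simp [transportCost, hc]

lemma convexOn_optimalTransportCost (c : ι → ι → ℝ) {q : ι → ℝ} (hq : q ∈ stdSimplex ℝ ι) :
    ConvexOn ℝ (stdSimplex ℝ ι) (fun p => optimalTransportCost c p q) := by
  refine ⟨convex_stdSimplex ℝ ι, fun p₁ hp₁ p₂ hp₂ a b ha hb hab => ?_⟩
  simp only [optimalTransportCost, smul_eq_mul]
  refine Real.le_smul_csInf_add_smul_csInf ((couplings_nonempty hp₁ hq).image _)
    (bddBelow_transportCost_image c p₁ q) ((couplings_nonempty hp₂ hq).image _)
    (bddBelow_transportCost_image c p₂ q) ha hb ?_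
  rintro _ ⟨w₁, hw₁, rfl⟩ _ ⟨w₂, hw₂, rfl⟩
  rw [← transportCost_smul_add_smul]
  exact csInf_le (bddBelow_transportCost_image c _ q)
    ⟨_, smul_add_smul_mem_couplings hw₁ hw₂ ha hb hab, rfl⟩

end OptimalTransport

lemma concaveOn_stdSimplex_sum_mul {ι : Type*} [Fintype ι] (h : ι → ℝ) :
    ConcaveOn ℝ (stdSimplex ℝ ι) (fun p => ∑ i, h i * p i) :=
  ⟨convex_stdSimplex ℝ ι, fun p₁ _ p₂ _ a b _ _ _ => le_of_eq <| by
    simp only [Pi.add_apply, Pi.smul_apply, smul_eq_mul, mul_add, mul_sum, sum_add_distrib,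
      mul_left_comm]⟩

theorem stmt6_general (N : ℕ) (h : Fin N → ℝ) (phat : Fin N → ℝ)
    (hphat : (∀ i, 0 ≤ phat i) ∧ ∑ i, phat i = 1)
    (c : Fin N → Fin N → ℝ) (hcd : ∀ i, c i i = 0)
    (W : (Fin N → ℝ) → ℝ)
    (hW : ∀ p, W p = sInf {v : ℝ | ∃ w : Fin N → Fin N → ℝ, (∀ i j, 0 ≤ w i j) ∧
      (∀ i, ∑ j, w i j = p i) ∧ (∀ j, ∑ i, w i j = phat j) ∧
      v = ∑ i, ∑ j, c i j * w i j})
    (g : ℝ → ℝ)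
    (hg : ∀ r, g r = sSup {v : ℝ | ∃ p : Fin N → ℝ, (∀ i, 0 ≤ p i) ∧ ∑ i, p i = 1 ∧
      W p ≤ r ∧ v = ∑ i, h i * p i}) :
    MonotoneOn g (Set.Ici (0 : ℝ)) ∧ ConcaveOn ℝ (Set.Ici (0 : ℝ)) g := by
  obtain rfl : W = fun p => optimalTransportCost c p phat := funext fun p => by
    rw [hW, optimalTransportCost]
    congr 1
    ext v
    simp [couplings, transportCost, and_assoc, eq_comm]
  obtain rfl : g = fun r => sSup ((fun p => ∑ i, h i * p i) ''
      {p ∈ stdSimplex ℝ (Fin N) | optimalTransportCost c p phat ≤ r}) := funext fun r => by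
    rw [hg]
    congr 1
    ext v
    simp [stdSimplex, and_assoc, eq_comm]
  have hbdd : BddAbove ((fun p => ∑ i, h i * p i) '' stdSimplex ℝ (Fin N)) :=
    (isCompact_stdSimplex ℝ (Fin N)).bddAbove_image (by fun_prop)
  have hfeas : ∃ p₀ ∈ stdSimplex ℝ (Fin N), optimalTransportCost c p₀ phat ≤ 0 :=
    ⟨phat, hphat, optimalTransportCost_self_nonpos hcd hphat.1⟩
  exact ⟨monotoneOn_sSup_image_sublevel hbdd hfeas,
    concaveOn_sSup_image_sublevel (convexOn_optimalTransportCost c hphat)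
      (concaveOn_stdSimplex_sum_mul h) hbdd hfeas⟩

theorem stmt6 (N : ℕ) (hN : 1 ≤ N) (h : Fin N → ℝ) (phat : Fin N → ℝ)
    (hphat : (∀ i, 0 ≤ phat i) ∧ ∑ i, phat i = 1)
    (c : Fin N → Fin N → ℝ) (hc : ∀ i j, 0 ≤ c i j) (hcd : ∀ i, c i i = 0)
    (W : (Fin N → ℝ) → ℝ)
    (hW : ∀ p, W p = sInf {v : ℝ | ∃ w : Fin N → Fin N → ℝ, (∀ i j, 0 ≤ w i j) ∧
      (∀ i, ∑ j, w i j = p i) ∧ (∀ j, ∑ i, w i j = phat j) ∧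
      v = ∑ i, ∑ j, c i j * w i j})
    (g : ℝ → ℝ)
    (hg : ∀ r, g r = sSup {v : ℝ | ∃ p : Fin N → ℝ, (∀ i, 0 ≤ p i) ∧ ∑ i, p i = 1 ∧
      W p ≤ r ∧ v = ∑ i, h i * p i}) :
    MonotoneOn g (Set.Ici (0 : ℝ)) ∧ ConcaveOn ℝ (Set.Ici (0 : ℝ)) g :=
  stmt6_general N h phat hphat c hcd W hW g hg
end

section
/- Let X and T be compact metric spaces, g : X × T → ℝ continuous, f : X → ℝ continuous, and ε > 0. Consider the exchange procedure: T₀ = ∅; at iteration k, pick x_k minimizing f over { x ∈ X : g(x,t) ≤ 0 ∀ t ∈ T_k } (assume this set is nonempty at every iteration), then pick t_{k+1} ∈ T with g(x_k, t_{k+1}) ≥ sup_{t∈T} g(x_k,t) − ε/2; if g(x_k, t_{k+1}) ≤ ε/2, stop; else T_{k+1} = T_k ∪ {t_{k+1}}. Then the procedure terminates after finitely many iterations. -/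
/-!
If the exchange procedure never stopped, it would produce points `x k` and constraints `t k`
with `g (x j) (t j) > ε / 2` for every `j`, while every later iterate `x k` (`j < k`) satisfies
the constraint, `g (x k) (t j) ≤ 0`. By compactness of `X × T`, the functions `g · t` are uniformly
equicontinuous, and by compactness of `X` some `x j` and a later `x k` lie so close that
`|g (x j) t - g (x k) t| < ε / 2` for all `t`; taking `t = t j` gives a contradiction.
-/

open Filter Topology Uniformity

theorem CompactSpace.exists_lt_mem_of_mem_uniformity {X : Type*} [UniformSpace X]
    [CompactSpace X] (u : ℕ → X) {V : SetRel X X} (hV : V ∈ 𝓤 X) :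
    ∃ j k, j < k ∧ (u j, u k) ∈ V := by
  obtain ⟨a, -, ha⟩ := isCompact_univ.exists_mapClusterPt (f := atTop) (u := u) (by simp)
  obtain ⟨W, hW, hWsymm, hWV⟩ := comp_symm_of_uniformity hV
  have hfrequently : ∀ n, ∃ m, n ≤ m ∧ u m ∈ UniformSpace.ball a W :=
    frequently_atTop.1 (mapClusterPt_iff_frequently.1 ha _ (UniformSpace.ball_mem_nhds a hW))
  obtain ⟨j, -, hj⟩ := hfrequently 0
  obtain ⟨k, hjk, hk⟩ := hfrequently (j + 1)
  exact ⟨j, k, hjk, hWV (SetRel.prodMk_mem_comp (hWsymm hj) hk)⟩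

theorem uniformEquicontinuous_swap_of_continuous_uncurry {X T β : Type*} [UniformSpace X]
    [CompactSpace X] [UniformSpace T] [CompactSpace T] [UniformSpace β] {g : X → T → β}
    (hg : Continuous ↿g) : UniformEquicontinuous (Function.swap g) :=
  CompactSpace.uniformEquicontinuous_of_equicontinuous fun x => hg.tendstoUniformly g x

theorem stmt11_general {X T : Type*} [MetricSpace X] [CompactSpace X] [MetricSpace T]
    [CompactSpace T]
    (g : X → T → ℝ) (hg : Continuous fun p : X × T => g p.1 p.2)
    (f : X → ℝ) (ε : ℝ) (hε : 0 < ε) :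
    ¬ ∃ (x : ℕ → X) (t : ℕ → T),
      (∀ k, (∀ j < k, g (x k) (t j) ≤ 0) ∧
        ∀ y : X, (∀ j < k, g y (t j) ≤ 0) → f (x k) ≤ f y) ∧
      (∀ k, ∀ s : T, g (x k) s - ε / 2 ≤ g (x k) (t k)) ∧
      (∀ k, ε / 2 < g (x k) (t k)) := by
  rintro ⟨x, t, hfeasible, -, hviolated⟩
  obtain ⟨j, k, hjk, hclose⟩ := CompactSpace.exists_lt_mem_of_mem_uniformity x
    (uniformEquicontinuous_swap_of_continuous_uncurry hg _
      (Metric.dist_mem_uniformity (half_pos hε)))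
  have hdist : dist (g (x j) (t j)) (g (x k) (t j)) < ε / 2 := hclose (t j)
  have hsatisfied : g (x k) (t j) ≤ 0 := (hfeasible k).1 j hjk
  rw [Real.dist_eq, abs_lt] at hdist
  linarith [hviolated j]

theorem stmt11 {X T : Type*} [MetricSpace X] [CompactSpace X] [MetricSpace T]
    [CompactSpace T] [Nonempty X] [Nonempty T]
    (g : X → T → ℝ) (hg : Continuous fun p : X × T => g p.1 p.2)
    (f : X → ℝ) (hf : Continuous f) (ε : ℝ) (hε : 0 < ε) :
    ¬ ∃ (x : ℕ → X) (t : ℕ → T),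
      (∀ k, (∀ j < k, g (x k) (t j) ≤ 0) ∧
        ∀ y : X, (∀ j < k, g y (t j) ≤ 0) → f (x k) ≤ f y) ∧
      (∀ k, ∀ s : T, g (x k) s - ε / 2 ≤ g (x k) (t k)) ∧
      (∀ k, ε / 2 < g (x k) (t k)) :=
  stmt11_general g hg f ε hε
end
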